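/- arXiv:2503.20647 — 3 statements merged into one kernel-verified Lean document; each statement's English description precedes it below -/
import Mathlib

section
/- Nonexistence of Armstrong relations in the Boolean setting: there is a set Σ' of inclusion atoms over the propositional variables {p_1, p_2, p_3} (namely Σ' = {p_1 ⊆ p_2}) such that no Boolean team T over {p_1, p_2, p_3} satisfies exactly the inclusion atoms over {p_1, p_2, p_3} that Σ' semantically entails; that is, for every Boolean team T there exists an inclusion atom a over {p_1, p_2, p_3} with T ⊨ a not equivalent to Σ' ⊨_bool a. -/
/-!
For unary atoms, `T ⊨ x ⊆ y` says that the values taken by `x` in `T` form a subset of those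
taken by `y`. If `T ⊨ p₁ ⊆ p₂` but `T ⊭ p₂ ⊆ p₁`, then `p₂` takes strictly more values than the
nonempty value set of `p₁`, hence both Boolean values; so `T ⊨ p₃ ⊆ p₂`, which `p₁ ⊆ p₂` does not
entail. In the remaining cases `T` either fails the entailed atom `p₁ ⊆ p₂` or satisfies the
non-entailed atom `p₂ ⊆ p₁`.
-/

def TeamSat {V : Type*} (T : Set (V → Bool)) (x y : List V) : Prop :=
  ∀ s ∈ T, ∃ s' ∈ T, x.map s = y.map s'

theorem Set.eq_univ_of_nonempty_of_ssubset {A B : Set Bool} (hA : A.Nonempty) (hAB : A ⊂ B) :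
    B = Set.univ := by
  obtain ⟨b, hb⟩ := hA
  obtain ⟨c, hcB, hcA⟩ := Set.exists_of_ssubset hAB
  refine Set.eq_univ_of_forall fun d => ?_
  by_cases hdb : d = b
  · exact hdb ▸ hAB.subset hb
  · have hdc : d = c := by
      cases b <;> cases c <;> cases d <;> simp_all
    exact hdc ▸ hcB

namespace TeamSat

variable {V : Type*} {T : Set (V → Bool)} {x y : V}

theorem unary_iff_image_subset :
    TeamSat T [x] [y] ↔ (fun s => s x) '' T ⊆ (fun s => s y) '' T := by
  simp only [TeamSat, Set.subset_def, Set.mem_image, List.map_cons, List.map_nil,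
    List.cons.injEq, and_true, forall_exists_index, and_imp, forall_apply_eq_imp_iff₂]
  exact forall₂_congr fun s _ => exists_congr fun s' => and_congr_right fun _ => eq_comm

theorem singleton_unary_iff {s : V → Bool} : TeamSat {s} [x] [y] ↔ s x = s y := by
  simp [TeamSat]

theorem unary_of_image_eq_univ (h : (fun s => s y) '' T = Set.univ) : TeamSat T [x] [y] :=
  unary_iff_image_subset.2 (h ▸ Set.subset_univ _)

theorem unary_of_not_unary_symm (hxy : TeamSat T [x] [y]) (hyx : ¬ TeamSat T [y] [x]) (z : V) :
    TeamSat T [z] [y] := by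
  rw [unary_iff_image_subset] at hxy hyx
  have hT : T.Nonempty := by
    by_contra hT
    simp [Set.not_nonempty_iff_eq_empty.1 hT] at hyx
  exact unary_of_image_eq_univ <|
    Set.eq_univ_of_nonempty_of_ssubset (hT.image _) (ssubset_of_subset_not_subset hxy hyx)

variable [DecidableEq V]

theorem unary_to_indicator_team (x y : V) :
    TeamSat {fun _ => false, fun w => decide (w = y)} [x] [y] := by
  refine unary_of_image_eq_univ (Set.eq_univ_of_forall fun b => ?_)
  cases b
  · exact ⟨fun _ => false, by simp⟩
  · exact ⟨fun w => decide (w = y), by simp⟩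

theorem not_unary_from_indicator_team (hxy : x ≠ y) :
    ¬ TeamSat {fun _ => false, fun w => decide (w = y)} [y] [x] := by
  intro h
  obtain ⟨s', hs', heq⟩ := h (fun w => decide (w = y)) (by simp)
  rcases hs' with rfl | rfl <;> simp [hxy] at heq

end TeamSat

/-- Nonexistence of Armstrong relations in the Boolean setting: with
`Σ' = {p₁ ⊆ p₂}` over three distinct variables, no Boolean team satisfies
exactly the inclusion atoms over `{p₁, p₂, p₃}` that `Σ'` semantically entails. -/
theorem no_armstrong_relation_bool {V : Type*}
    (p1 p2 p3 : V) (h12 : p1 ≠ p2) (h13 : p1 ≠ p3) (h23 : p2 ≠ p3) :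
    ∀ T : Set (V → Bool), ∃ a : List V × List V,
      a.1.length = a.2.length ∧
      (∀ v ∈ a.1, v ∈ ({p1, p2, p3} : Set V)) ∧
      (∀ v ∈ a.2, v ∈ ({p1, p2, p3} : Set V)) ∧
      ¬ (TeamSat T a.1 a.2 ↔
          (∀ T' : Set (V → Bool), TeamSat T' [p1] [p2] → TeamSat T' a.1 a.2)) := by
  intro T
  classical
  by_cases h21 : TeamSat T [p2] [p1]
  · refine ⟨([p2], [p1]), rfl, by simp, by simp, fun hiff => ?_⟩
    exact TeamSat.not_unary_from_indicator_team h12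
      (hiff.1 h21 _ (TeamSat.unary_to_indicator_team p1 p2))
  by_cases h12' : TeamSat T [p1] [p2]
  · refine ⟨([p3], [p2]), rfl, by simp, by simp, fun hiff => ?_⟩
    have h32 := hiff.1 (h12'.unary_of_not_unary_symm h21 p3) {fun w => decide (w = p3)}
      (TeamSat.singleton_unary_iff.2 (by simp [h13, h23]))
    simp [TeamSat.singleton_unary_iff, h23] at h32
  · exact ⟨([p1], [p2]), rfl, by simp, by simp, fun hiff => h12' (hiff.2 fun _ h => h)⟩
end

section
/- For distinct propositional variables p_a and p_b, the set {p_a ⊆ p_b, p_b ⊆ p_a} does not semantically entail p_a p_b ⊆ p_a p_a, even in the Boolean setting: there exists a Boolean team T with T ⊨ p_a ⊆ p_b and T ⊨ p_b ⊆ p_a but T ⊭ p_a p_b ⊆ p_a p_a. -/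
/-! The team of all assignments giving `p_a` and `p_b` different values is closed under
negation, and negating such an assignment swaps the values of `p_a` and `p_b`; this gives both
unary inclusions. But `p_a p_b ⊆ p_a p_a` forces every assignment of the team to agree on
`p_a` and `p_b`, and since `p_a ≠ p_b` the team is nonempty. -/

section

variable {V : Type*}

theorem teamSat_singleton_of_neg_mem {T : Set (V → Bool)} {x y : V}
    (hneg : ∀ s ∈ T, (fun v => !s v) ∈ T) (hne : ∀ s ∈ T, s x ≠ s y) :
    TeamSat T [x] [y] :=
  fun s hs => ⟨fun v => !s v, hneg s hs, by simpa [Bool.eq_not_iff] using hne s hs⟩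

theorem TeamSat.apply_eq_of_pair_repeat {T : Set (V → Bool)} {x y z : V}
    (h : TeamSat T [x, y] [z, z]) {s : V → Bool} (hs : s ∈ T) : s x = s y := by
  obtain ⟨s', -, hs'⟩ := h s hs
  simp only [List.map_cons, List.map_nil, List.cons.injEq, and_true] at hs'
  rw [hs'.1, hs'.2]

end

/-- `{p_a ⊆ p_b, p_b ⊆ p_a}` does not entail `p_a p_b ⊆ p_a p_a`, even in the
Boolean setting. -/
theorem mutual_inclusion_does_not_entail_equality {V : Type*}
    (pa pb : V) (hab : pa ≠ pb) :
    ∃ T : Set (V → Bool),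
      TeamSat T [pa] [pb] ∧ TeamSat T [pb] [pa] ∧
      ¬ TeamSat T [pa, pb] [pa, pa] := by
  classical
  have hneg : ∀ s ∈ {s : V → Bool | s pa ≠ s pb}, (fun v => !s v) ∈ {s | s pa ≠ s pb} :=
    fun s hs => by simpa using hs
  refine ⟨{s | s pa ≠ s pb}, teamSat_singleton_of_neg_mem hneg fun _ => id,
    teamSat_singleton_of_neg_mem hneg fun _ => Ne.symm, fun h => ?_⟩
  have hmem : (fun v => decide (v = pb)) ∈ {s : V → Bool | s pa ≠ s pb} := by simpa using hab
  exact hmem (h.apply_eq_of_pair_repeat hmem)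
end

section
/- For pairwise distinct propositional variables x_1, x_2, y_1, y_2, z_1, the set Σ = {y_2z_1 ⊆ z_1z_1, x_1z_1 ⊆ y_1y_2} does not semantically entail x_1x_2 ⊆ y_1y_2 in the Boolean setting: there exists a Boolean team T over {x_1, x_2, y_1, y_2, z_1} satisfying both atoms of Σ but not x_1x_2 ⊆ y_1y_2. -/
theorem teamSat_singleton_iff {V : Type*} (s : V → Bool) (x y : List V) :
    TeamSat {s} x y ↔ x.map s = y.map s := by
  simp [TeamSat]

/-- `{y₂z₁ ⊆ z₁z₁, x₁z₁ ⊆ y₁y₂}` does not semantically entail `x₁x₂ ⊆ y₁y₂`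
in the Boolean setting. -/
theorem counterexample_two {V : Type*}
    (x1 x2 y1 y2 z1 : V) (hdist : ([x1, x2, y1, y2, z1] : List V).Nodup) :
    ∃ T : Set (V → Bool),
      TeamSat T [y2, z1] [z1, z1] ∧ TeamSat T [x1, z1] [y1, y2] ∧
      ¬ TeamSat T [x1, x2] [y1, y2] := by
  classical
  simp only [List.nodup_cons, List.mem_cons, List.not_mem_nil, or_false, not_or] at hdist
  obtain ⟨⟨hx1x2, -⟩, ⟨hx2y1, hx2y2, hx2z1⟩, -⟩ := hdist
  refine ⟨{fun v => decide (v = x2)}, ?_⟩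
  simp only [teamSat_singleton_iff]
  simp [hx1x2, Ne.symm hx2y1, Ne.symm hx2y2, Ne.symm hx2z1]
end
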